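/- arXiv:math/0508638 — 4 statements merged into one kernel-verified Lean document; each statement's English description precedes it below -/
import Mathlib

section
/- The linear map ν : A ⋈ H → A ♮ H given by ν(φ ⋈ h) = (φ·h₂) ♮ h₁ is an algebra isomorphism from the diagonal crossed product to the L-R-smash product, with inverse ν⁻¹(φ ♮ h) = (φ·S⁻¹(h₂)) ⋈ h₁. -/
/-!
`ν'(ν(φ ⋈ h)) = ∑ φ·h₃S⁻¹(h₂) ⋈ h₁` and `ν(ν'(φ ♮ h)) = ∑ φ·S⁻¹(h₃)h₂ ♮ h₁`, and both collapse
because `∑ h₂S⁻¹(h₁) = ∑ S⁻¹(h₂)h₁ = ε(h)`, which one sees by applying the injective map `S`.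

For multiplicativity, both `ν((φ ⋈ h)(φ' ⋈ h'))` and `ν(φ ⋈ h) ν(φ' ⋈ h')` equal
`∑ (φ·h₃h'₂)(h₁·φ'·h'₃) ♮ h₂h'₁`. On the left, the measuring property of the right action gives
`∑ (φ·h₃h'₂)(h₁·φ'·S⁻¹(h₅)h₄h'₃) ♮ h₂h'₁`, in which `S⁻¹(h₅)h₄` collapses to `ε(h₄)`; on the
right, one moves `h₁·` past `·h'₂` and regroups the coproducts of `h` and `h'` by coassociativity.
-/

open scoped TensorProduct
open Finset

theorem Finset.exists_nat_bijOn {ι : Type*} [Nonempty ι] (s : Finset ι) :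
    ∃ (t : Finset ℕ) (σ : ℕ → ι), Set.BijOn σ t s :=
  ⟨range s.card, (finite_toSet _).exists_bijOn_of_encard_eq <| by
    rw [Set.encard_coe_eq_coe_finsetCard, Set.encard_coe_eq_coe_finsetCard, card_range]⟩

namespace LinearMap

variable {R M N P Q : Type*} [CommSemiring R] [AddCommMonoid M] [AddCommMonoid N]
  [AddCommMonoid P] [AddCommMonoid Q] [Module R M] [Module R N] [Module R P] [Module R Q]

variable (R) in
def mk₃ (f : M → N → P → Q)
    (H1 : ∀ x x' y z, f (x + x') y z = f x y z + f x' y z)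
    (H2 : ∀ (c : R) x y z, f (c • x) y z = c • f x y z)
    (H3 : ∀ x y y' z, f x (y + y') z = f x y z + f x y' z)
    (H4 : ∀ (c : R) x y z, f x (c • y) z = c • f x y z)
    (H5 : ∀ x y z z', f x y (z + z') = f x y z + f x y z')
    (H6 : ∀ (c : R) x y z, f x y (c • z) = c • f x y z) :
    M →ₗ[R] N →ₗ[R] P →ₗ[R] Q :=
  mk₂ R (fun x y => ⟨⟨f x y, H5 x y⟩, (H6 · x y)⟩)
    (fun x x' y => ext (H1 x x' y)) (fun c x y => ext (H2 c x y))
    (fun x y y' => ext (H3 x y y')) (fun c x y => ext (H4 c x y))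

end LinearMap

namespace Coalgebra

section CoalgebraStruct

variable {R C P : Type*} [CommSemiring R] [AddCommMonoid C] [Module R C] [CoalgebraStruct R C]
  [AddCommMonoid P]

-- For bilinear `F` this is the Sweedler sum `∑ F c₁ c₂`; for other `F` it depends on the
-- arbitrary choice `ℛ R c` of a representation of `Δ c` (compare `sweedlerSum_eq_sum_repr`).
variable (R) in
noncomputable def sweedlerSum (c : C) (F : C → C → P) : P :=
  ∑ i ∈ (ℛ R c).index, F ((ℛ R c).left i) ((ℛ R c).right i)

theorem map_sweedlerSum {Q G : Type*} [AddCommMonoid Q] [FunLike G P Q] [AddMonoidHomClass G P Q]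
    (g : G) (c : C) (F : C → C → P) :
    g (sweedlerSum R c F) = sweedlerSum R c fun a b => g (F a b) :=
  map_sum g _ _

theorem sweedlerSum_comm {D : Type*} [AddCommMonoid D] [Module R D] [CoalgebraStruct R D]
    (c : C) (d : D) (F : C → C → D → D → P) :
    (sweedlerSum R c fun a b => sweedlerSum R d fun x y => F a b x y) =
      sweedlerSum R d fun x y => sweedlerSum R c fun a b => F a b x y :=
  sum_comm

theorem sweedlerSum_congr {c : C} {F G : C → C → P} (h : ∀ a b, F a b = G a b) :
    sweedlerSum R c F = sweedlerSum R c G :=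
  congrArg (sweedlerSum R c) (funext₂ h)

theorem sweedlerSum_tmul {M N : Type*} [AddCommMonoid M] [Module R M] [AddCommMonoid N] [Module R N]
    (c : C) (F : C → C → M) (n : N) :
    sweedlerSum R c F ⊗ₜ[R] n = sweedlerSum R c fun a b => F a b ⊗ₜ[R] n :=
  _root_.TensorProduct.sum_tmul _ _ _

theorem sweedlerSum_apply {M N : Type*} [AddCommMonoid M] [Module R M] [AddCommMonoid N]
    [Module R N] (c : C) (F : C → C → M →ₗ[R] N) (m : M) :
    sweedlerSum R c F m = sweedlerSum R c fun a b => F a b m :=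
  LinearMap.sum_apply _ _ _

theorem sweedlerSum_eq_sum_repr [Module R P] (B : C →ₗ[R] C →ₗ[R] P) {c : C} {ι : Type*}
    (ρ : Repr R c ι) :
    (sweedlerSum R c fun a b => B a b) = ∑ i ∈ ρ.index, B (ρ.left i) (ρ.right i) := by
  simp only [sweedlerSum, ← TensorProduct.lift.tmul, ← map_sum, Repr.eq]

theorem eq_sweedlerSum_of_forall_nat {c : C} {y : P} {F : C → C → P}
    (hy : ∀ (s : Finset ℕ) (f g : ℕ → C), comul c = ∑ i ∈ s, f i ⊗ₜ[R] g i →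
      y = ∑ i ∈ s, F (f i) (g i)) :
    y = sweedlerSum R c F := by
  obtain ⟨t, σ, hσ⟩ := (ℛ R c).index.exists_nat_bijOn
  rw [sweedlerSum, ← sum_nbij σ hσ.mapsTo hσ.injOn hσ.surjOn fun _ _ => rfl]
  refine hy t _ _ ?_
  rw [← (ℛ R c).eq, ← sum_nbij σ hσ.mapsTo hσ.injOn hσ.surjOn fun _ _ => rfl]

theorem eq_sweedlerSum_sweedlerSum_of_forall_nat {c d : C} {y : P} {F : C → C → C → C → P}
    (hy : ∀ (s t : Finset ℕ) (f g f' g' : ℕ → C), comul c = ∑ i ∈ s, f i ⊗ₜ[R] g i →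
      comul d = ∑ j ∈ t, f' j ⊗ₜ[R] g' j → y = ∑ i ∈ s, ∑ j ∈ t, F (f i) (g i) (f' j) (g' j)) :
    y = sweedlerSum R c fun a b => sweedlerSum R d fun a' b' => F a b a' b' :=
  eq_sweedlerSum_of_forall_nat fun s f g hc =>
    (eq_sweedlerSum_of_forall_nat (F := fun a' b' => ∑ i ∈ s, F (f i) (g i) a' b')
      fun t f' g' hd => (hy s t f g f' g' hc hd).trans sum_comm).trans sum_comm

theorem eq_sweedlerSum_sweedlerSum_right_of_forall_nat {c : C} {y : P} {F : C → C → C → P}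
    (hy : ∀ (s : Finset ℕ) (f g e : ℕ → C),
      _root_.TensorProduct.map LinearMap.id comul (comul c) = ∑ i ∈ s, f i ⊗ₜ[R] (g i ⊗ₜ[R] e i) →
      y = ∑ i ∈ s, F (f i) (g i) (e i)) :
    y = sweedlerSum R c fun a b => sweedlerSum R b fun b₁ b₂ => F a b₁ b₂ := by
  have : Nonempty ((_ : C × C) × C × C) := ⟨⟨0, 0⟩⟩
  obtain ⟨t, σ, hσ⟩ :=
    ((ℛ R c).index.sigma fun i => (ℛ R ((ℛ R c).right i)).index).exists_nat_bijOn
  simp only [sweedlerSum]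
  rw [sum_sigma', ← sum_nbij σ hσ.mapsTo hσ.injOn hσ.surjOn fun _ _ => rfl]
  refine hy t _ _ _ ?_
  rw [sum_nbij σ hσ.mapsTo hσ.injOn hσ.surjOn (g := fun x => (ℛ R c).left x.1 ⊗ₜ[R]
    ((ℛ R ((ℛ R c).right x.1)).left x.2 ⊗ₜ[R] (ℛ R ((ℛ R c).right x.1)).right x.2))
    fun _ _ => rfl, sum_sigma]
  simp only [← (ℛ R c).eq, map_sum, _root_.TensorProduct.map_tmul, LinearMap.id_apply,
    ← (ℛ R (Repr.right _ _)).eq, _root_.TensorProduct.tmul_sum]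

end CoalgebraStruct

section Coalgebra

variable {R C P : Type*} [CommSemiring R] [AddCommMonoid C] [Module R C] [Coalgebra R C]
  [AddCommMonoid P] [Module R P]

theorem sweedlerSum_counit_right_smul (c : C) :
    (sweedlerSum R c fun a b => counit (R := R) b • a) = c := by
  have := congr(_root_.TensorProduct.rid R C $(sum_tmul_counit_eq (ℛ R c)))
  simpa only [map_sum, _root_.TensorProduct.rid_tmul, one_smul, sweedlerSum] using this

theorem sweedlerSum_coassoc (T : C →ₗ[R] C →ₗ[R] C →ₗ[R] P) (c : C) :
    (sweedlerSum R c fun a b => sweedlerSum R a fun a₁ a₂ => T a₁ a₂ b) =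
      sweedlerSum R c fun a b => sweedlerSum R b fun b₁ b₂ => T a b₁ b₂ := by
  simpa [sweedlerSum, map_sum] using
    congr(_root_.TensorProduct.lift (_root_.TensorProduct.uncurry _ C C P ∘ₗ T)
      $(sum_tmul_tmul_eq (ℛ R c) (fun i => ℛ R ((ℛ R c).left i)) fun i => ℛ R ((ℛ R c).right i)))

theorem sweedlerSum_collapse {M : Type*} [AddCommMonoid M] [Module R M]
    (L : C →ₗ[R] M →ₗ[R] P) (Ψ : C →ₗ[R] C →ₗ[R] M) (m : M)
    (hΨ : ∀ w, (sweedlerSum R w fun x y => Ψ x y) = counit (R := R) w • m) (c : C) :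
    (sweedlerSum R c fun a b => sweedlerSum R a fun a₁ a₂ => L a₁ (Ψ a₂ b)) = L c m := by
  calc (sweedlerSum R c fun a b => sweedlerSum R a fun a₁ a₂ => L a₁ (Ψ a₂ b))
      = sweedlerSum R c fun a b => sweedlerSum R b fun b₁ b₂ => L a (Ψ b₁ b₂) :=
        sweedlerSum_coassoc (LinearMap.mk₃ R (fun x y z => L x (Ψ y z))
          (by simp) (by simp) (by simp) (by simp) (by simp) (by simp)) c
    _ = sweedlerSum R c fun a b => L (counit (R := R) b • a) m := by
        simp only [← map_sweedlerSum, hΨ, map_smul, LinearMap.smul_apply]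
    _ = L c m := by
        rw [sweedlerSum, ← LinearMap.sum_apply, ← map_sum]
        exact congr(L $(sweedlerSum_counit_right_smul c) m)

end Coalgebra

end Coalgebra

namespace HopfAlgebra

open Coalgebra

variable {R H : Type*} [CommSemiring R] [Semiring H] [HopfAlgebra R H] {Sinv : H →ₗ[R] H}

theorem sweedlerSum_antipodeInv_mul_eq_smul (h₁ : ∀ x, Sinv (antipode R x) = x)
    (h₂ : ∀ x, antipode R (Sinv x) = x) (w : H) :
    (sweedlerSum R w fun x y => Sinv y * x) = counit (R := R) w • 1 := by
  apply Function.LeftInverse.injective h₁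
  rw [map_sweedlerSum, map_smul, antipode_one]
  simp only [antipode_mul_antidistrib, h₂]
  exact sum_antipode_mul_eq_smul (ℛ R w)

theorem sweedlerSum_mul_antipodeInv_eq_smul (h₁ : ∀ x, Sinv (antipode R x) = x)
    (h₂ : ∀ x, antipode R (Sinv x) = x) (w : H) :
    (sweedlerSum R w fun x y => y * Sinv x) = counit (R := R) w • 1 := by
  apply Function.LeftInverse.injective h₁
  rw [map_sweedlerSum, map_smul, antipode_one]
  simp only [antipode_mul_antidistrib, h₂]
  exact sum_mul_antipode_eq_smul (ℛ R w)

end HopfAlgebra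

section Twist

open Coalgebra

variable {k H A : Type*} [CommSemiring k] [Semiring H] [HopfAlgebra k H] [Semiring A] [Algebra k A]

def IsTwist (α : H →ₗ[k] A →ₗ[k] A) (T : A ⊗[k] H →ₗ[k] A ⊗[k] H) : Prop :=
  ∀ φ h, T (φ ⊗ₜ h) = sweedlerSum k h fun h₁ h₂ => α h₂ φ ⊗ₜ h₁

variable {α : H →ₗ[k] A →ₗ[k] A} {T : A ⊗[k] H →ₗ[k] A ⊗[k] H}

theorem isTwist_of_forall_nat
    (hT : ∀ (φ : A) (h : H) (s : Finset ℕ) (f g : ℕ → H),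
      comul (R := k) h = ∑ i ∈ s, f i ⊗ₜ g i → T (φ ⊗ₜ h) = ∑ i ∈ s, α (g i) φ ⊗ₜ f i) :
    IsTwist α T :=
  fun φ h => eq_sweedlerSum_of_forall_nat (hT φ h)

theorem IsTwist.apply_tmul_repr (hT : IsTwist α T) (φ : A) {h : H} {ι : Type*}
    (ρ : Repr k h ι) : T (φ ⊗ₜ h) = ∑ i ∈ ρ.index, α (ρ.right i) φ ⊗ₜ ρ.left i :=
  (hT φ h).trans (sweedlerSum_eq_sum_repr ((TensorProduct.mk k A H).flip.compl₂ (α.flip φ)) ρ)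

theorem IsTwist.apply_tmul_mul (hT : IsTwist α T) (φ : A) (x y : H) :
    T (φ ⊗ₜ (x * y)) = sweedlerSum k x fun x₁ x₂ => sweedlerSum k y fun y₁ y₂ =>
      α (x₂ * y₂) φ ⊗ₜ (x₁ * y₁) := by
  rw [hT.apply_tmul_repr φ ((ℛ k x).mul (ℛ k y)), Repr.mul_index, sum_product]
  rfl

theorem IsTwist.apply_tmul_one (hT : IsTwist α T) (φ : A) : T (φ ⊗ₜ 1) = α 1 φ ⊗ₜ 1 := by
  simpa using hT.apply_tmul_repr φ
    (⟨{()}, fun _ => 1, fun _ => 1, by simp [Algebra.TensorProduct.one_def]⟩ : Repr k (1 : H) Unit)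

theorem IsTwist.comp_apply_eq_self {β θ : H →ₗ[k] A →ₗ[k] A} {T' : A ⊗[k] H →ₗ[k] A ⊗[k] H}
    (hT : IsTwist α T) (hT' : IsTwist β T') (Ψ : H →ₗ[k] H →ₗ[k] H)
    (hΨ : ∀ w, (sweedlerSum k w fun x y => Ψ x y) = counit (R := k) w • 1)
    (hβα : ∀ x y φ, β x (α y φ) = θ (Ψ x y) φ) (hθ : ∀ φ, θ 1 φ = φ) (z : A ⊗[k] H) :
    T' (T z) = z := by
  induction z using TensorProduct.induction_on with
  | zero => simp
  | tmul φ h =>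
    let L : H →ₗ[k] H →ₗ[k] A ⊗[k] H := (TensorProduct.mk k A H).flip.compl₂ (θ.flip φ)
    calc T' (T (φ ⊗ₜ h))
        = sweedlerSum k h fun a b => sweedlerSum k a fun a₁ a₂ => L a₁ (Ψ a₂ b) := by
          simp only [hT φ h, map_sweedlerSum, hT' _ _, hβα]
          rfl
      _ = L h 1 := sweedlerSum_collapse L Ψ 1 hΨ h
      _ = φ ⊗ₜ h := by simp [L, hθ]
  | add x y hx hy => simp [hx, hy]

end Twist

section Product

open Coalgebra

-- `r h φ`, `l h φ` and `Sinv h` stand for the paper's `φ·h`, `h·φ` and `S⁻¹(h)`.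

variable {k H A : Type*} [CommSemiring k] [Semiring H] [HopfAlgebra k H] [Semiring A] [Algebra k A]

def IsMeasuring (r : H →ₗ[k] A →ₗ[k] A) : Prop :=
  ∀ h a b, r h (a * b) = sweedlerSum k h fun h₁ h₂ => r h₁ a * r h₂ b

def IsDiagonalCrossedProductMul (r l : H →ₗ[k] A →ₗ[k] A) (Sinv : H →ₗ[k] H)
    (m : A ⊗[k] H →ₗ[k] A ⊗[k] H →ₗ[k] A ⊗[k] H) : Prop :=
  ∀ φ φ' h h', m (φ ⊗ₜ h) (φ' ⊗ₜ h') =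
    sweedlerSum k h fun h₁ y => sweedlerSum k y fun h₂ h₃ =>
      (φ * r (Sinv h₃) (l h₁ φ')) ⊗ₜ (h₂ * h')

def IsLRSmashProductMul (r l : H →ₗ[k] A →ₗ[k] A)
    (m : A ⊗[k] H →ₗ[k] A ⊗[k] H →ₗ[k] A ⊗[k] H) : Prop :=
  ∀ φ φ' h h', m (φ ⊗ₜ h) (φ' ⊗ₜ h') =
    sweedlerSum k h fun h₁ h₂ => sweedlerSum k h' fun h'₁ h'₂ =>
      (r h'₂ φ * l h₁ φ') ⊗ₜ (h₂ * h'₁)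

variable {r l : H →ₗ[k] A →ₗ[k] A}

theorem isMeasuring_of_forall_nat
    (hr : ∀ (h : H) (a b : A) (s : Finset ℕ) (f g : ℕ → H),
      comul (R := k) h = ∑ i ∈ s, f i ⊗ₜ g i → r h (a * b) = ∑ i ∈ s, r (f i) a * r (g i) b) :
    IsMeasuring r :=
  fun h a b => eq_sweedlerSum_of_forall_nat (hr h a b)

theorem IsMeasuring.apply_mul_mul (hr : IsMeasuring r) (x y : H) (a b : A) :
    r (x * y) (a * b) = sweedlerSum k x fun x₁ x₂ => sweedlerSum k y fun y₁ y₂ =>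
      r (x₁ * y₁) a * r (x₂ * y₂) b := by
  refine (hr _ _ _).trans <| (sweedlerSum_eq_sum_repr
    ((LinearMap.mul k A).compl₁₂ (r.flip a) (r.flip b)) ((ℛ k x).mul (ℛ k y))).trans ?_
  rw [Repr.mul_index, sum_product]
  rfl

variable {Sinv : H →ₗ[k] H} {ν : A ⊗[k] H →ₗ[k] A ⊗[k] H}

theorem twist_mulD_tmul {mulD : A ⊗[k] H →ₗ[k] A ⊗[k] H →ₗ[k] A ⊗[k] H}
    (hν : IsTwist r ν) (hr : IsMeasuring r) (hr_mul : ∀ h h' a, r (h * h') a = r h' (r h a))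
    (hSinv : ∀ w, (sweedlerSum k w fun x y => Sinv y * x) = counit (R := k) w • 1)
    (hmulD : IsDiagonalCrossedProductMul r l Sinv mulD)
    (φ φ' : A) (h h' : H) :
    ν (mulD (φ ⊗ₜ h) (φ' ⊗ₜ h')) =
      sweedlerSum k h fun h₁ y => sweedlerSum k y fun h₂ h₃ =>
        sweedlerSum k h' fun h'₁ z => sweedlerSum k z fun h'₂ h'₃ =>
          (r (h₃ * h'₂) φ * r h'₃ (l h₁ φ')) ⊗ₜ (h₂ * h'₁) := by
  let L (f c : H) : H →ₗ[k] H →ₗ[k] A ⊗[k] H := LinearMap.mk₂ k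
    (fun x z => sweedlerSum k h' fun a' b' => sweedlerSum k b' fun p₁ p₂ =>
      (r (x * p₁) φ * r (z * p₂) (l f φ')) ⊗ₜ (c * a'))
    (by intros; simp [sweedlerSum, add_mul, sum_add_distrib, TensorProduct.add_tmul])
    (by intros; simp [sweedlerSum, smul_sum, TensorProduct.smul_tmul'])
    (by intros; simp [sweedlerSum, add_mul, mul_add, sum_add_distrib, TensorProduct.add_tmul])
    (by intros; simp [sweedlerSum, smul_sum, TensorProduct.smul_tmul'])
  calc ν (mulD (φ ⊗ₜ h) (φ' ⊗ₜ h'))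
      = sweedlerSum k h fun f y => sweedlerSum k y fun g e => sweedlerSum k g fun g₁ g₂ =>
          sweedlerSum k h' fun a' b' =>
            r (g₂ * b') (φ * r (Sinv e) (l f φ')) ⊗ₜ (g₁ * a') := by
        simp only [hmulD _ _ _ _, map_sweedlerSum, hν.apply_tmul_mul]
    _ = sweedlerSum k h fun f y => sweedlerSum k y fun c u => sweedlerSum k u fun u₁ u₂ =>
          sweedlerSum k h' fun a' b' =>
            r (u₁ * b') (φ * r (Sinv u₂) (l f φ')) ⊗ₜ (c * a') := by
        refine sweedlerSum_congr fun f y => ?_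
        exact sweedlerSum_coassoc (LinearMap.mk₃ k (fun x y z => sweedlerSum k h' fun a' b' =>
            r (y * b') (φ * r (Sinv z) (l f φ')) ⊗ₜ (x * a'))
          (by intros; simp [sweedlerSum, add_mul, sum_add_distrib, TensorProduct.tmul_add])
          (by intros; simp [sweedlerSum, smul_sum])
          (by intros; simp [sweedlerSum, add_mul, sum_add_distrib, TensorProduct.add_tmul])
          (by intros; simp [sweedlerSum, smul_sum, TensorProduct.smul_tmul'])
          (by intros; simp [sweedlerSum, mul_add, sum_add_distrib, TensorProduct.add_tmul])
          (by intros; simp [sweedlerSum, smul_sum, TensorProduct.smul_tmul'])) y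
    _ = sweedlerSum k h fun f y => sweedlerSum k y fun c u => sweedlerSum k u fun u₁ u₂ =>
          sweedlerSum k u₁ fun v₁ v₂ => L f c v₁ (Sinv u₂ * v₂) := by
        refine sweedlerSum_congr fun f y => sweedlerSum_congr fun c u =>
          sweedlerSum_congr fun u₁ u₂ => ?_
        simp only [hr.apply_mul_mul, ← hr_mul, ← mul_assoc, sweedlerSum_tmul]
        exact sweedlerSum_comm _ _ _
    _ = sweedlerSum k h fun f y => sweedlerSum k y fun c u => L f c u 1 := by
        refine sweedlerSum_congr fun f y => sweedlerSum_congr fun c u => ?_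
        exact sweedlerSum_collapse (L f c) ((LinearMap.mul k H).flip.compl₂ Sinv) 1 hSinv u
    _ = _ := by simp [L]

theorem mulL_twist_tmul {mulL : A ⊗[k] H →ₗ[k] A ⊗[k] H →ₗ[k] A ⊗[k] H}
    (hν : IsTwist r ν) (hr_mul : ∀ h h' a, r (h * h') a = r h' (r h a))
    (hcomm : ∀ h h' a, l h (r h' a) = r h' (l h a))
    (hmulL : IsLRSmashProductMul r l mulL)
    (φ φ' : A) (h h' : H) :
    mulL (ν (φ ⊗ₜ h)) (ν (φ' ⊗ₜ h')) =
      sweedlerSum k h fun h₁ y => sweedlerSum k y fun h₂ h₃ =>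
        sweedlerSum k h' fun h'₁ z => sweedlerSum k z fun h'₂ h'₃ =>
          (r (h₃ * h'₂) φ * r h'₃ (l h₁ φ')) ⊗ₜ (h₂ * h'₁) := by
  calc mulL (ν (φ ⊗ₜ h)) (ν (φ' ⊗ₜ h'))
      = sweedlerSum k h fun a b => sweedlerSum k a fun a₁ a₂ =>
          sweedlerSum k h' fun a' b' => sweedlerSum k a' fun a'₁ a'₂ =>
            (r (b * a'₂) φ * r b' (l a₁ φ')) ⊗ₜ (a₂ * a'₁) := by
        simp only [hν _ _, map_sweedlerSum, sweedlerSum_apply, hmulL _ _ _ _, ← hr_mul, hcomm]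
        rw [sweedlerSum_comm]
        exact sweedlerSum_congr fun a b => sweedlerSum_comm _ _ _
    _ = sweedlerSum k h fun h₁ y => sweedlerSum k y fun h₂ h₃ =>
          sweedlerSum k h' fun a' b' => sweedlerSum k a' fun a'₁ a'₂ =>
            (r (h₃ * a'₂) φ * r b' (l h₁ φ')) ⊗ₜ (h₂ * a'₁) := by
        exact sweedlerSum_coassoc (LinearMap.mk₃ k (fun x₁ x₂ x₃ =>
            sweedlerSum k h' fun a' b' => sweedlerSum k a' fun a'₁ a'₂ =>
              (r (x₃ * a'₂) φ * r b' (l x₁ φ')) ⊗ₜ (x₂ * a'₁))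
          (by intros; simp [sweedlerSum, mul_add, sum_add_distrib, TensorProduct.add_tmul])
          (by intros; simp [sweedlerSum, smul_sum, TensorProduct.smul_tmul'])
          (by intros; simp [sweedlerSum, add_mul, sum_add_distrib, TensorProduct.tmul_add])
          (by intros; simp [sweedlerSum, smul_sum])
          (by intros; simp [sweedlerSum, add_mul, sum_add_distrib, TensorProduct.add_tmul])
          (by intros; simp [sweedlerSum, smul_sum, TensorProduct.smul_tmul'])) h
    _ = _ := by
        refine sweedlerSum_congr fun h₁ y => sweedlerSum_congr fun h₂ h₃ => ?_
        exact sweedlerSum_coassoc (LinearMap.mk₃ k (fun x₁ x₂ x₃ =>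
            (r (h₃ * x₂) φ * r x₃ (l h₁ φ')) ⊗ₜ (h₂ * x₁))
          (by intros; simp [mul_add, TensorProduct.tmul_add])
          (by intros; simp)
          (by intros; simp [mul_add, add_mul, TensorProduct.add_tmul])
          (by intros; simp [TensorProduct.smul_tmul'])
          (by intros; simp [mul_add, TensorProduct.add_tmul])
          (by intros; simp [TensorProduct.smul_tmul'])) h'

theorem twist_mulD_eq_mulL {mulD mulL : A ⊗[k] H →ₗ[k] A ⊗[k] H →ₗ[k] A ⊗[k] H}
    (hν : IsTwist r ν) (hr : IsMeasuring r) (hr_mul : ∀ h h' a, r (h * h') a = r h' (r h a))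
    (hcomm : ∀ h h' a, l h (r h' a) = r h' (l h a))
    (hSinv : ∀ w, (sweedlerSum k w fun x y => Sinv y * x) = counit (R := k) w • 1)
    (hmulD : IsDiagonalCrossedProductMul r l Sinv mulD)
    (hmulL : IsLRSmashProductMul r l mulL)
    (x y : A ⊗[k] H) : ν (mulD x y) = mulL (ν x) (ν y) :=
  LinearMap.congr_fun₂ (f := mulD.compr₂ ν) (g := mulL.compl₁₂ ν ν)
    (TensorProduct.ext' fun φ h => TensorProduct.ext' fun φ' h' =>
      (twist_mulD_tmul hν hr hr_mul hSinv hmulD φ φ' h h').trans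
        (mulL_twist_tmul hν hr_mul hcomm hmulL φ φ' h h').symm) x y

end Product

theorem stmt_2_general (k H A : Type) [Field k] [Ring H] [HopfAlgebra k H]
    [Ring A] [Algebra k A]
    (l : H →ₗ[k] A →ₗ[k] A)
    (r : H →ₗ[k] A →ₗ[k] A)
    (hr_one : ∀ a : A, r 1 a = a)
    (hr_mul : ∀ (h h' : H) (a : A), r (h * h') a = r h' (r h a))
    (hr_meas : ∀ (h : H) (a b : A) (s : Finset ℕ) (f g : ℕ → H),
      Coalgebra.comul (R := k) h = ∑ i ∈ s, f i ⊗ₜ[k] g i →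
      r h (a * b) = ∑ i ∈ s, r (f i) a * r (g i) b)
    (hcomm : ∀ (h h' : H) (a : A), l h (r h' a) = r h' (l h a))
    (Sinv : H →ₗ[k] H)
    (hSinv1 : ∀ h : H, Sinv (HopfAlgebra.antipode (R := k) h) = h)
    (hSinv2 : ∀ h : H, HopfAlgebra.antipode (R := k) (Sinv h) = h)
    (mulL : (A ⊗[k] H) →ₗ[k] (A ⊗[k] H) →ₗ[k] (A ⊗[k] H))
    (hmulL : ∀ (φ φ' : A) (h h' : H) (s t : Finset ℕ) (f g f' g' : ℕ → H),
      Coalgebra.comul (R := k) h = ∑ i ∈ s, f i ⊗ₜ[k] g i →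
      Coalgebra.comul (R := k) h' = ∑ j ∈ t, f' j ⊗ₜ[k] g' j →
      mulL (φ ⊗ₜ[k] h) (φ' ⊗ₜ[k] h') =
        ∑ i ∈ s, ∑ j ∈ t, (r (g' j) φ * l (f i) φ') ⊗ₜ[k] (g i * f' j))
    (mulD : (A ⊗[k] H) →ₗ[k] (A ⊗[k] H) →ₗ[k] (A ⊗[k] H))
    (hmulD : ∀ (φ φ' : A) (h h' : H) (s : Finset ℕ) (f g e : ℕ → H),
      (TensorProduct.map (LinearMap.id : H →ₗ[k] H) (Coalgebra.comul (R := k))) (Coalgebra.comul (R := k) h) =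
        ∑ i ∈ s, f i ⊗ₜ[k] (g i ⊗ₜ[k] e i) →
      mulD (φ ⊗ₜ[k] h) (φ' ⊗ₜ[k] h') =
        ∑ i ∈ s, (φ * r (Sinv (e i)) (l (f i) φ')) ⊗ₜ[k] (g i * h'))
    (ν ν' : (A ⊗[k] H) →ₗ[k] (A ⊗[k] H))
    (hν : ∀ (φ : A) (h : H) (s : Finset ℕ) (f g : ℕ → H),
      Coalgebra.comul (R := k) h = ∑ i ∈ s, f i ⊗ₜ[k] g i →
      ν (φ ⊗ₜ[k] h) = ∑ i ∈ s, r (g i) φ ⊗ₜ[k] f i)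
    (hν' : ∀ (φ : A) (h : H) (s : Finset ℕ) (f g : ℕ → H),
      Coalgebra.comul (R := k) h = ∑ i ∈ s, f i ⊗ₜ[k] g i →
      ν' (φ ⊗ₜ[k] h) = ∑ i ∈ s, r (Sinv (g i)) φ ⊗ₜ[k] f i) :
    (∀ x y : A ⊗[k] H, ν (mulD x y) = mulL (ν x) (ν y)) ∧
    ν ((1 : A) ⊗ₜ[k] (1 : H)) = (1 : A) ⊗ₜ[k] (1 : H) ∧
    (∀ x : A ⊗[k] H, ν' (ν x) = x) ∧
    (∀ x : A ⊗[k] H, ν (ν' x) = x) := by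
  have hν₀ : IsTwist r ν := isTwist_of_forall_nat hν
  have hν'₀ : IsTwist (r ∘ₗ Sinv) ν' := isTwist_of_forall_nat hν'
  refine ⟨twist_mulD_eq_mulL hν₀ (isMeasuring_of_forall_nat hr_meas) hr_mul hcomm
      (HopfAlgebra.sweedlerSum_antipodeInv_mul_eq_smul hSinv1 hSinv2)
      (fun φ φ' h h' => Coalgebra.eq_sweedlerSum_sweedlerSum_right_of_forall_nat (hmulD φ φ' h h'))
      (fun φ φ' h h' => Coalgebra.eq_sweedlerSum_sweedlerSum_of_forall_nat (hmulL φ φ' h h')),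
    by rw [hν₀.apply_tmul_one, hr_one], ?_, ?_⟩
  · exact hν₀.comp_apply_eq_self hν'₀ ((LinearMap.mul k H).flip ∘ₗ Sinv)
      (HopfAlgebra.sweedlerSum_mul_antipodeInv_eq_smul hSinv1 hSinv2)
      (fun x y φ => (hr_mul y (Sinv x) φ).symm) hr_one
  · exact hν'₀.comp_apply_eq_self hν₀ ((LinearMap.mul k H).flip.compl₂ Sinv)
      (HopfAlgebra.sweedlerSum_antipodeInv_mul_eq_smul hSinv1 hSinv2)
      (fun x y φ => (hr_mul (Sinv y) x φ).symm) hr_one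

/-- `ν(φ ⋈ h) = (φ·h₂) ♮ h₁` is an algebra isomorphism from the diagonal
crossed product `A ⋈ H` (multiplication `mulD`) to the L-R-smash product `A ♮ H`
(multiplication `mulL`), with inverse `ν'(φ ♮ h) = (φ·S⁻¹(h₂)) ⋈ h₁`. -/
theorem stmt_2 (k H A : Type) [Field k] [Ring H] [HopfAlgebra k H]
    [Ring A] [Algebra k A]
    (l : H →ₗ[k] A →ₗ[k] A)
    (hl_one : ∀ a : A, l 1 a = a)
    (hl_mul : ∀ (h h' : H) (a : A), l (h * h') a = l h (l h' a))
    (hl_unit : ∀ h : H, l h (1 : A) = Coalgebra.counit (R := k) h • (1 : A))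
    (hl_meas : ∀ (h : H) (a b : A) (s : Finset ℕ) (f g : ℕ → H),
      Coalgebra.comul (R := k) h = ∑ i ∈ s, f i ⊗ₜ[k] g i →
      l h (a * b) = ∑ i ∈ s, l (f i) a * l (g i) b)
    (r : H →ₗ[k] A →ₗ[k] A)
    (hr_one : ∀ a : A, r 1 a = a)
    (hr_mul : ∀ (h h' : H) (a : A), r (h * h') a = r h' (r h a))
    (hr_unit : ∀ h : H, r h (1 : A) = Coalgebra.counit (R := k) h • (1 : A))
    (hr_meas : ∀ (h : H) (a b : A) (s : Finset ℕ) (f g : ℕ → H),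
      Coalgebra.comul (R := k) h = ∑ i ∈ s, f i ⊗ₜ[k] g i →
      r h (a * b) = ∑ i ∈ s, r (f i) a * r (g i) b)
    (hcomm : ∀ (h h' : H) (a : A), l h (r h' a) = r h' (l h a))
    (Sinv : H →ₗ[k] H)
    (hSinv1 : ∀ h : H, Sinv (HopfAlgebra.antipode (R := k) h) = h)
    (hSinv2 : ∀ h : H, HopfAlgebra.antipode (R := k) (Sinv h) = h)
    (mulL : (A ⊗[k] H) →ₗ[k] (A ⊗[k] H) →ₗ[k] (A ⊗[k] H))
    (hmulL : ∀ (φ φ' : A) (h h' : H) (s t : Finset ℕ) (f g f' g' : ℕ → H),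
      Coalgebra.comul (R := k) h = ∑ i ∈ s, f i ⊗ₜ[k] g i →
      Coalgebra.comul (R := k) h' = ∑ j ∈ t, f' j ⊗ₜ[k] g' j →
      mulL (φ ⊗ₜ[k] h) (φ' ⊗ₜ[k] h') =
        ∑ i ∈ s, ∑ j ∈ t, (r (g' j) φ * l (f i) φ') ⊗ₜ[k] (g i * f' j))
    (mulD : (A ⊗[k] H) →ₗ[k] (A ⊗[k] H) →ₗ[k] (A ⊗[k] H))
    (hmulD : ∀ (φ φ' : A) (h h' : H) (s : Finset ℕ) (f g e : ℕ → H),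
      (TensorProduct.map (LinearMap.id : H →ₗ[k] H) (Coalgebra.comul (R := k))) (Coalgebra.comul (R := k) h) =
        ∑ i ∈ s, f i ⊗ₜ[k] (g i ⊗ₜ[k] e i) →
      mulD (φ ⊗ₜ[k] h) (φ' ⊗ₜ[k] h') =
        ∑ i ∈ s, (φ * r (Sinv (e i)) (l (f i) φ')) ⊗ₜ[k] (g i * h'))
    (ν ν' : (A ⊗[k] H) →ₗ[k] (A ⊗[k] H))
    (hν : ∀ (φ : A) (h : H) (s : Finset ℕ) (f g : ℕ → H),
      Coalgebra.comul (R := k) h = ∑ i ∈ s, f i ⊗ₜ[k] g i →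
      ν (φ ⊗ₜ[k] h) = ∑ i ∈ s, r (g i) φ ⊗ₜ[k] f i)
    (hν' : ∀ (φ : A) (h : H) (s : Finset ℕ) (f g : ℕ → H),
      Coalgebra.comul (R := k) h = ∑ i ∈ s, f i ⊗ₜ[k] g i →
      ν' (φ ⊗ₜ[k] h) = ∑ i ∈ s, r (Sinv (g i)) φ ⊗ₜ[k] f i) :
    (∀ x y : A ⊗[k] H, ν (mulD x y) = mulL (ν x) (ν y)) ∧
    ν ((1 : A) ⊗ₜ[k] (1 : H)) = (1 : A) ⊗ₜ[k] (1 : H) ∧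
    (∀ x : A ⊗[k] H, ν' (ν x) = x) ∧
    (∀ x : A ⊗[k] H, ν (ν' x) = x) :=
  stmt_2_general k H A l r hr_one hr_mul hr_meas hcomm Sinv hSinv1 hSinv2 mulL hmulL mulD hmulD ν ν'
    hν hν'
end

section
/- Kadison's algebra A^e ◇ H is an associative unital algebra, i.e., the multiplication (a⊗b⊗h)(a'⊗b'⊗h') = a(h₁·a') ⊗ b'(S(h'₂)·b) ⊗ h₂h'₁ on A ⊗ A ⊗ H is associative with unit 1⊗1⊗1. -/
/-!
The left nucleus `{x | (x y) z = x (y z) for all y z}` of a bilinear multiplication is a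
submodule closed under the multiplication, and every pure tensor factors as
`a ⊗ b ⊗ h = (a ⊗ 1 ⊗ 1) ((1 ⊗ 1 ⊗ h) (1 ⊗ b ⊗ 1))`. So associativity reduces to showing that
these three kinds of generators lie in the nucleus. For `a ⊗ 1 ⊗ 1` this is associativity of `A`;
for `1 ⊗ 1 ⊗ h` it is the measuring property together with one use of coassociativity of `h`; for
`1 ⊗ b ⊗ 1` it needs coassociativity of both other arguments and the fact that `S` is an
anti-coalgebra map, `Δ (S x) = S x₂ ⊗ S x₁`. The latter holds because both sides are
convolution inverses of `Δ`.
-/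

open scoped TensorProduct
open Finset Coalgebra

lemma Finset.sum_sum_comm_sum_sum {α β γ δ M : Type*} [AddCommMonoid M] {s : Finset α}
    {t : α → Finset β} {u : Finset γ} {v : γ → Finset δ} (f : α → β → γ → δ → M) :
    ∑ a ∈ s, ∑ b ∈ t a, ∑ c ∈ u, ∑ d ∈ v c, f a b c d =
      ∑ c ∈ u, ∑ d ∈ v c, ∑ a ∈ s, ∑ b ∈ t a, f a b c d :=
  (sum_congr rfl fun _ _ => sum_comm.trans (sum_congr rfl fun _ _ => sum_comm)).trans
    (sum_comm.trans (sum_congr rfl fun _ _ => sum_comm))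

namespace TensorProduct

variable {R M N P : Type*} [CommSemiring R] [AddCommMonoid M] [Module R M] [AddCommMonoid N]
  [Module R N] [AddCommMonoid P] [Module R P]

lemma tmul_smul_tmul (x : M) (c : R) (y : N) (z : P) :
    (x ⊗ₜ[R] (c • y)) ⊗ₜ[R] z = (x ⊗ₜ[R] y) ⊗ₜ[R] (c • z) := by
  rw [tmul_smul, smul_tmul]

lemma smul_tmul_tmul (c : R) (x : M) (y : N) (z : P) :
    ((c • x) ⊗ₜ[R] y) ⊗ₜ[R] z = (x ⊗ₜ[R] y) ⊗ₜ[R] (c • z) := by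
  rw [← smul_tmul', smul_tmul]

lemma submodule_eq_top_of_tmul_tmul_mem {p : Submodule R ((M ⊗[R] N) ⊗[R] P)}
    (h : ∀ x y z, (x ⊗ₜ[R] y) ⊗ₜ[R] z ∈ p) : p = ⊤ := by
  refine Submodule.eq_top_iff'.2 fun x => ?_
  induction x using TensorProduct.induction_on with
  | zero => exact p.zero_mem
  | add x y hx hy => exact p.add_mem hx hy
  | tmul xy z =>
    induction xy using TensorProduct.induction_on with
    | zero => simp
    | add u v hu hv => rw [add_tmul]; exact p.add_mem hu hv
    | tmul x y => exact h x y z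

end TensorProduct

namespace Coalgebra

variable {R C : Type*} [CommSemiring R] [AddCommMonoid C] [Module R C] [Coalgebra R C]
  {c : C} {ι : Type*}

lemma sum_counit_right_smul (r : Repr R c ι) :
    ∑ i ∈ r.index, counit (R := R) (r.right i) • r.left i = c := by
  simpa only [map_sum, _root_.TensorProduct.rid_tmul, one_smul] using
    congrArg (_root_.TensorProduct.rid R C) (sum_tmul_counit_eq r)

-- Lets hypotheses phrased with `ℕ`-indexed Sweedler sums be applied to any representation.
noncomputable def Repr.toNat (r : Repr R c ι) : Repr R c ℕ where
  index := range r.index.card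
  left n := if h : n < r.index.card then r.left (r.index.equivFin.symm ⟨n, h⟩) else 0
  right n := if h : n < r.index.card then r.right (r.index.equivFin.symm ⟨n, h⟩) else 0
  eq := by
    rw [← r.eq, ← sum_coe_sort r.index, ← r.index.equivFin.symm.sum_comp, sum_range]
    simp

lemma Repr.sum_toNat {N : Type*} [AddCommMonoid N] (r : Repr R c ι) (F : C → C → N) :
    ∑ n ∈ r.toNat.index, F (r.toNat.left n) (r.toNat.right n) =
      ∑ i ∈ r.index, F (r.left i) (r.right i) := by
  rw [← sum_coe_sort r.index, ← r.index.equivFin.symm.sum_comp, Repr.toNat, sum_range]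
  simp

lemma sum_apply_tmul_tmul_eq {N : Type*} [AddCommMonoid N] [Module R N]
    (F : C ⊗[R] (C ⊗[R] C) →ₗ[R] N) (r : Repr R c ι) {κ μ : ι → Type*}
    (r₁ : ∀ i, Repr R (r.left i) (κ i)) (r₂ : ∀ i, Repr R (r.right i) (μ i)) :
    ∑ i ∈ r.index, ∑ j ∈ (r₁ i).index, F ((r₁ i).left j ⊗ₜ ((r₁ i).right j ⊗ₜ r.right i)) =
      ∑ i ∈ r.index, ∑ j ∈ (r₂ i).index, F (r.left i ⊗ₜ ((r₂ i).left j ⊗ₜ (r₂ i).right j)) := by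
  simpa only [map_sum] using congrArg F (sum_tmul_tmul_eq r r₁ r₂)

def Repr.one {B : Type*} [Semiring B] [Bialgebra R B] : Repr R (1 : B) Unit where
  index := univ
  left _ := 1
  right _ := 1
  eq := by simp [Algebra.TensorProduct.one_def]

end Coalgebra

namespace HopfAlgebra

variable {R H : Type*} [CommSemiring R] [Semiring H] [HopfAlgebra R H] {x : H} {ι : Type*}

local notation "S" => antipode R (A := H)

lemma sum_antipode_tmul_one_mul_comul (r : Repr R x ι) :
    ∑ i ∈ r.index, (S (r.left i) ⊗ₜ[R] (1 : H)) * comul (r.right i) = 1 ⊗ₜ x := by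
  let Ψ : H ⊗[R] (H ⊗[R] H) →ₗ[R] H ⊗[R] H :=
    (LinearMap.mul' R H ∘ₗ LinearMap.rTensor H S).rTensor H ∘ₗ
      (_root_.TensorProduct.assoc R H H H).symm
  calc _ = ∑ i ∈ r.index, ∑ j ∈ (ℛ R (r.right i)).index,
        Ψ (r.left i ⊗ₜ ((ℛ R (r.right i)).left j ⊗ₜ (ℛ R (r.right i)).right j)) := by
        simp [Ψ, ← (ℛ R (r.right _)).eq, mul_sum]
    _ = ∑ i ∈ r.index, ∑ j ∈ (ℛ R (r.left i)).index,
        Ψ ((ℛ R (r.left i)).left j ⊗ₜ ((ℛ R (r.left i)).right j ⊗ₜ r.right i)) :=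
        (sum_apply_tmul_tmul_eq Ψ r _ _).symm
    _ = 1 ⊗ₜ x := by
        conv_rhs => rw [← sum_counit_smul r, TensorProduct.tmul_sum]
        simp [Ψ, ← TensorProduct.sum_tmul, sum_antipode_mul_eq_smul, TensorProduct.smul_tmul]

lemma comul_left_inv :
    WithConv.toConv (TensorProduct.map S S ∘ₗ (TensorProduct.comm R H H).toLinearMap ∘ₗ comul) *
      WithConv.toConv (comul (R := R) (A := H)) = 1 := by
  let Φ : H ⊗[R] (H ⊗[R] H) →ₗ[R] H ⊗[R] H :=
    LinearMap.mul' R (H ⊗[R] H) ∘ₗ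
      TensorProduct.map (TensorProduct.map S S ∘ₗ (TensorProduct.comm R H H).toLinearMap) comul ∘ₗ
      (TensorProduct.assoc R H H H).symm
  have hswap : ∀ p q : H, S q ⊗ₜ[R] S p = (1 ⊗ₜ S p) * (S q ⊗ₜ[R] (1 : H)) := by simp
  ext x
  rw [(ℛ R x).convMul_apply]
  calc _ = ∑ i ∈ (ℛ R x).index, ∑ j ∈ (ℛ R ((ℛ R x).left i)).index,
        Φ ((ℛ R ((ℛ R x).left i)).left j ⊗ₜ
          ((ℛ R ((ℛ R x).left i)).right j ⊗ₜ (ℛ R x).right i)) := by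
        simp [Φ, ← (ℛ R ((ℛ R x).left _)).eq, sum_mul]
    _ = ∑ i ∈ (ℛ R x).index, ∑ j ∈ (ℛ R ((ℛ R x).right i)).index,
        Φ ((ℛ R x).left i ⊗ₜ
          ((ℛ R ((ℛ R x).right i)).left j ⊗ₜ (ℛ R ((ℛ R x).right i)).right j)) :=
        sum_apply_tmul_tmul_eq Φ _ _ _
    _ = ∑ i ∈ (ℛ R x).index, (1 ⊗ₜ S ((ℛ R x).left i)) * (1 ⊗ₜ (ℛ R x).right i) := by
        simp only [Φ, LinearMap.comp_apply, TensorProduct.assoc_symm_tmul, TensorProduct.map_tmul,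
          LinearEquiv.coe_coe, TensorProduct.comm_tmul, LinearMap.mul'_apply, hswap, mul_assoc,
          ← mul_sum, sum_antipode_tmul_one_mul_comul]
    _ = _ := by
        simp [← TensorProduct.tmul_sum, sum_antipode_mul_eq_smul, Algebra.algebraMap_eq_smul_one,
          ← Algebra.TensorProduct.one_def]

lemma comul_antipode (x : H) :
    comul (S x) = TensorProduct.map S S (TensorProduct.comm R H H (comul x)) := by
  have := left_inv_eq_right_inv (M := WithConv (H →ₗ[R] H ⊗[R] H))
    comul_left_inv LinearMap.comul_right_inv
  exact (LinearMap.congr_fun (congrArg WithConv.ofConv this) x).symm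

def _root_.Coalgebra.Repr.antipode (r : Repr R x ι) : Repr R (S x) ι where
  index := r.index
  left i := S (r.right i)
  right i := S (r.left i)
  eq := by simp [comul_antipode, ← r.eq]

end HopfAlgebra

section Nucleus

variable {R M : Type*} [CommSemiring R] [AddCommMonoid M] [Module R M]

def leftNucleus (m : M →ₗ[R] M →ₗ[R] M) : Submodule R M where
  carrier := {x | ∀ y z, m (m x y) z = m x (m y z)}
  add_mem' {x x'} hx hx' y z := by simp [hx y z, hx' y z]
  zero_mem' := by simp
  smul_mem' c x hx y z := by simp [hx y z]

lemma mul_mem_leftNucleus {m : M →ₗ[R] M →ₗ[R] M} {x w : M} (hx : x ∈ leftNucleus m)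
    (hw : w ∈ leftNucleus m) : m x w ∈ leftNucleus m := fun y z => by
  rw [hx w y, hx, hw, ← hx]

end Nucleus

lemma mem_leftNucleus_of_tmul {R P Q T : Type*} [CommSemiring R] [AddCommMonoid P] [Module R P]
    [AddCommMonoid Q] [Module R Q] [AddCommMonoid T] [Module R T]
    {m : (P ⊗[R] Q) ⊗[R] T →ₗ[R] (P ⊗[R] Q) ⊗[R] T →ₗ[R] (P ⊗[R] Q) ⊗[R] T}
    {x : (P ⊗[R] Q) ⊗[R] T}
    (h : ∀ p q t p' q' t', m (m x ((p ⊗ₜ q) ⊗ₜ t)) ((p' ⊗ₜ q') ⊗ₜ t') =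
      m x (m ((p ⊗ₜ q) ⊗ₜ t) ((p' ⊗ₜ q') ⊗ₜ t'))) :
    x ∈ leftNucleus m := by
  have : m ∘ₗ m x = LinearMap.llcomp R _ _ _ (m x) ∘ₗ m :=
    TensorProduct.ext_threefold fun p q t => TensorProduct.ext_threefold fun p' q' t' => h ..
  exact fun y z => congrArg (fun f => f y z) this

section Kadison

variable {k H A : Type*} [CommSemiring k] [Semiring H] [HopfAlgebra k H] [Semiring A]
  [Algebra k A] {ι κ : Type*}

local notation "S" => HopfAlgebra.antipode k (A := H)

structure IsModuleAlgebraAction (l : H →ₗ[k] A →ₗ[k] A) : Prop where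
  one_apply (a : A) : l 1 a = a
  mul_apply (h h' : H) (a : A) : l (h * h') a = l h (l h' a)
  apply_one (h : H) : l h 1 = counit (R := k) h • 1
  apply_mul (h : H) (a b : A) (s : Finset ℕ) (f g : ℕ → H) :
    comul (R := k) h = ∑ i ∈ s, f i ⊗ₜ[k] g i → l h (a * b) = ∑ i ∈ s, l (f i) a * l (g i) b

lemma IsModuleAlgebraAction.apply_mul_eq_sum {l : H →ₗ[k] A →ₗ[k] A}
    (hl : IsModuleAlgebraAction l) {h : H} (r : Repr k h ι) (a b : A) :
    l h (a * b) = ∑ i ∈ r.index, l (r.left i) a * l (r.right i) b :=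
  (hl.apply_mul h a b _ _ _ r.toNat.eq.symm).trans (r.sum_toNat fun x y => l x a * l y b)

def IsKadisonMul (l : H →ₗ[k] A →ₗ[k] A)
    (m : (A ⊗[k] A) ⊗[k] H →ₗ[k] (A ⊗[k] A) ⊗[k] H →ₗ[k] (A ⊗[k] A) ⊗[k] H) : Prop :=
  ∀ (a b a' b' : A) (h h' : H) (s t : Finset ℕ) (f g f' g' : ℕ → H),
    comul (R := k) h = ∑ i ∈ s, f i ⊗ₜ[k] g i → comul (R := k) h' = ∑ j ∈ t, f' j ⊗ₜ[k] g' j →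
    m ((a ⊗ₜ b) ⊗ₜ h) ((a' ⊗ₜ b') ⊗ₜ h') =
      ∑ i ∈ s, ∑ j ∈ t, ((a * l (f i) a') ⊗ₜ[k] (b' * l (S (g' j)) b)) ⊗ₜ[k] (g i * f' j)

namespace IsKadisonMul

variable {l : H →ₗ[k] A →ₗ[k] A}
  {m : (A ⊗[k] A) ⊗[k] H →ₗ[k] (A ⊗[k] A) ⊗[k] H →ₗ[k] (A ⊗[k] A) ⊗[k] H}

lemma tmul_mul_tmul (hm : IsKadisonMul l m) (a b a' b' : A) {h h' : H}
    (r : Repr k h ι) (r' : Repr k h' κ) :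
    m ((a ⊗ₜ b) ⊗ₜ h) ((a' ⊗ₜ b') ⊗ₜ h') = ∑ i ∈ r.index, ∑ j ∈ r'.index,
      ((a * l (r.left i) a') ⊗ₜ[k] (b' * l (S (r'.right j)) b)) ⊗ₜ[k] (r.right i * r'.left j) := by
  rw [hm a b a' b' h h' _ _ _ _ _ _ r.toNat.eq.symm r'.toNat.eq.symm]
  refine (r.sum_toNat fun x y => ∑ j ∈ r'.toNat.index,
    ((a * l x a') ⊗ₜ[k] (b' * l (S (r'.toNat.right j)) b)) ⊗ₜ[k] (y * r'.toNat.left j)).trans ?_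
  exact sum_congr rfl fun i _ => r'.sum_toNat fun x y =>
    ((a * l (r.left i) a') ⊗ₜ[k] (b' * l (S y) b)) ⊗ₜ[k] (r.right i * x)

variable (hm : IsKadisonMul l m) (hl : IsModuleAlgebraAction l)
include hm hl

lemma tmul_one_one_mul (a a' b' : A) (h' : H) :
    m ((a ⊗ₜ 1) ⊗ₜ 1) ((a' ⊗ₜ b') ⊗ₜ h') = ((a * a') ⊗ₜ[k] b') ⊗ₜ[k] h' := by
  rw [hm.tmul_mul_tmul a 1 a' b' Repr.one (ℛ k h')]
  simp only [Repr.one, hl.one_apply, hl.apply_one, HopfAlgebra.counit_antipode, mul_smul_comm,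
    mul_one, one_mul, TensorProduct.tmul_smul_tmul, ← TensorProduct.tmul_sum,
    sum_counit_right_smul, Finset.univ_unique, sum_singleton]

lemma one_one_tmul_mul {h : H} (r : Repr k h ι) (a' b' : A) (h' : H) :
    m ((1 ⊗ₜ 1) ⊗ₜ h) ((a' ⊗ₜ b') ⊗ₜ h') =
      ∑ i ∈ r.index, ((l (r.left i) a') ⊗ₜ[k] b') ⊗ₜ[k] (r.right i * h') := by
  rw [hm.tmul_mul_tmul 1 1 a' b' r (ℛ k h')]
  simp only [hl.apply_one, HopfAlgebra.counit_antipode, mul_smul_comm, mul_one, one_mul,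
    TensorProduct.tmul_smul_tmul]
  simp only [← mul_smul_comm, ← mul_sum, ← TensorProduct.tmul_sum, sum_counit_right_smul]

lemma one_tmul_one_mul (b a' b' : A) {h' : H} (r' : Repr k h' ι) :
    m ((1 ⊗ₜ b) ⊗ₜ 1) ((a' ⊗ₜ b') ⊗ₜ h') =
      ∑ j ∈ r'.index, (a' ⊗ₜ[k] (b' * l (S (r'.right j)) b)) ⊗ₜ[k] r'.left j := by
  rw [hm.tmul_mul_tmul 1 b a' b' Repr.one r']
  simp [Repr.one, hl.one_apply]

lemma tmul_eq_mul_mul (a b : A) (h : H) :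
    (a ⊗ₜ b) ⊗ₜ h = m ((a ⊗ₜ 1) ⊗ₜ 1) (m ((1 ⊗ₜ 1) ⊗ₜ h) ((1 ⊗ₜ b) ⊗ₜ 1)) := by
  rw [hm.one_one_tmul_mul hl (ℛ k h)]
  simp only [hl.apply_one, mul_one, hm.tmul_one_one_mul hl,
    TensorProduct.smul_tmul_tmul, ← TensorProduct.tmul_sum, sum_counit_smul]

lemma tmul_one_one_mem_leftNucleus (a : A) : (a ⊗ₜ 1) ⊗ₜ 1 ∈ leftNucleus m :=
  mem_leftNucleus_of_tmul fun a' b' h' a'' b'' h'' => by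
    simp [hm.tmul_one_one_mul hl, hm.tmul_mul_tmul _ _ _ _ (ℛ k h') (ℛ k h''), mul_assoc]

lemma one_one_tmul_mem_leftNucleus (h : H) : (1 ⊗ₜ 1) ⊗ₜ h ∈ leftNucleus m := by
  refine mem_leftNucleus_of_tmul fun a' b' h' a'' b'' h'' => ?_
  set r := ℛ k h
  set r' := ℛ k h'
  set r'' := ℛ k h''
  -- Both sides are sums of values of `F` on the Sweedler components `h₁ ⊗ h₂ ⊗ h₃` of `h`,
  -- bracketed differently.
  let F : H ⊗[k] (H ⊗[k] H) →ₗ[k] (A ⊗[k] A) ⊗[k] H := ∑ j ∈ r'.index, ∑ p ∈ r''.index,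
    TensorProduct.map ((TensorProduct.mk k A A).flip (b'' * l (S (r''.right p)) b') ∘ₗ
      LinearMap.mul' k A ∘ₗ TensorProduct.map (l.flip a') (l.flip (l (r'.left j) a'')))
      (LinearMap.mulRight k (r'.right j * r''.left p)) ∘ₗ (TensorProduct.assoc k H H H).symm
  have coassoc_h :=
    sum_apply_tmul_tmul_eq F r (fun i => ℛ k (r.left i)) (fun i => ℛ k (r.right i))
  simp only [F, LinearMap.sum_apply, LinearMap.comp_apply, LinearEquiv.coe_coe,
    TensorProduct.assoc_symm_tmul, TensorProduct.map_tmul, LinearMap.mul'_apply,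
    LinearMap.flip_apply, TensorProduct.mk_apply, LinearMap.mulRight_apply] at coassoc_h
  rw [hm.one_one_tmul_mul hl r, map_sum, LinearMap.sum_apply,
    hm.tmul_mul_tmul _ _ _ _ r' r'', map_sum]
  simp only [hm.tmul_mul_tmul _ _ _ _ ((ℛ k (r.right _)).mul r') r'', map_sum,
    hm.one_one_tmul_mul hl r, Repr.mul_index, Repr.mul_left, Repr.mul_right, sum_product,
    hl.mul_apply, mul_assoc, hl.apply_mul_eq_sum (ℛ k (r.left _)), TensorProduct.sum_tmul]
  exact coassoc_h.symm.trans (Finset.sum_sum_comm_sum_sum _)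

lemma one_tmul_one_mem_leftNucleus (b : A) : (1 ⊗ₜ b) ⊗ₜ 1 ∈ leftNucleus m := by
  refine mem_leftNucleus_of_tmul fun a' b' h' a'' b'' h'' => ?_
  set r' := ℛ k h'
  set r'' := ℛ k h''
  -- As in the previous lemma, but now the summands are linear in the Sweedler components of `h'`
  -- (through `F`) and, for fixed components of `h'`, in those of `h''` (through `G`).
  let G (α c : A) (x : H) : H ⊗[k] (H ⊗[k] H) →ₗ[k] (A ⊗[k] A) ⊗[k] H :=
    (TensorProduct.comm k H (A ⊗[k] A)).toLinearMap ∘ₗ TensorProduct.map (LinearMap.mulLeft k x)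
      (TensorProduct.mk k A A α ∘ₗ LinearMap.mulLeft k b'' ∘ₗ LinearMap.mul' k A ∘ₗ
        (TensorProduct.comm k A A).toLinearMap ∘ₗ
        TensorProduct.map (l.flip c ∘ₗ S) (l.flip b' ∘ₗ S))
  have coassoc_h'' (α c : A) (x : H) := sum_apply_tmul_tmul_eq (G α c x) r''
    (fun p => ℛ k (r''.left p)) (fun p => ℛ k (r''.right p))
  let F : H ⊗[k] (H ⊗[k] H) →ₗ[k] (A ⊗[k] A) ⊗[k] H :=
    ∑ p ∈ r''.index, ∑ w ∈ (ℛ k (r''.right p)).index,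
      TensorProduct.map (TensorProduct.map (LinearMap.mulLeft k a' ∘ₗ l.flip a'')
          (LinearMap.mulLeft k b'' ∘ₗ
            LinearMap.mulLeft k (l (S ((ℛ k (r''.right p)).right w)) b') ∘ₗ
            l (S ((ℛ k (r''.right p)).left w)) ∘ₗ l.flip b ∘ₗ S))
        (LinearMap.mulRight k (r''.left p)) ∘ₗ
      (TensorProduct.assoc k H H H).symm.toLinearMap ∘ₗ
      (TensorProduct.comm k H H).toLinearMap.lTensor H
  have coassoc_h' :=
    sum_apply_tmul_tmul_eq F r' (fun j => ℛ k (r'.left j)) (fun j => ℛ k (r'.right j))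
  simp only [F, G, LinearMap.sum_apply, LinearMap.comp_apply, LinearEquiv.coe_coe,
    TensorProduct.assoc_symm_tmul, TensorProduct.map_tmul, LinearMap.mul'_apply,
    LinearMap.flip_apply, TensorProduct.mk_apply, LinearMap.mulRight_apply,
    LinearMap.mulLeft_apply, LinearMap.lTensor_tmul, TensorProduct.comm_tmul]
    at coassoc_h' coassoc_h''
  rw [hm.one_tmul_one_mul hl b a' b' r', map_sum, LinearMap.sum_apply,
    hm.tmul_mul_tmul _ _ _ _ r' r'', map_sum]
  simp only [hm.tmul_mul_tmul _ _ _ _ (ℛ k (r'.left _)) r'', map_sum,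
    hm.one_tmul_one_mul hl b _ _ ((ℛ k (r'.right _)).mul (ℛ k (r''.left _))),
    Repr.mul_index, Repr.mul_left, Repr.mul_right, sum_product,
    hl.mul_apply, mul_assoc, hl.apply_mul_eq_sum (ℛ k (r''.right _)).antipode, mul_sum,
    HopfAlgebra.antipode_mul_antidistrib, Repr.antipode, TensorProduct.sum_tmul,
    TensorProduct.tmul_sum]
  rw [coassoc_h']
  refine sum_congr rfl fun j _ => Eq.trans ?_ sum_comm
  exact sum_congr rfl fun v _ => (coassoc_h'' _ _ _).symm

theorem leftNucleus_eq_top : leftNucleus m = ⊤ :=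
  TensorProduct.submodule_eq_top_of_tmul_tmul_mem fun a b h => by
    rw [hm.tmul_eq_mul_mul hl]
    exact mul_mem_leftNucleus (hm.tmul_one_one_mem_leftNucleus hl a)
      (mul_mem_leftNucleus (hm.one_one_tmul_mem_leftNucleus hl h)
        (hm.one_tmul_one_mem_leftNucleus hl b))

lemma one_mul (x : (A ⊗[k] A) ⊗[k] H) : m ((1 ⊗ₜ 1) ⊗ₜ 1) x = x := by
  refine LinearMap.congr_fun (TensorProduct.ext_threefold (h := LinearMap.id) fun a' b' h' => ?_) x
  simp [hm.one_one_tmul_mul hl Repr.one, Repr.one, hl.one_apply]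

lemma mul_one (x : (A ⊗[k] A) ⊗[k] H) : m x ((1 ⊗ₜ 1) ⊗ₜ 1) = x := by
  refine LinearMap.congr_fun (TensorProduct.ext_threefold (g := m.flip ((1 ⊗ₜ 1) ⊗ₜ 1))
    (h := LinearMap.id) fun a b h => ?_) x
  simp only [LinearMap.flip_apply, LinearMap.id_apply, hm.tmul_mul_tmul a b 1 1 (ℛ k h) Repr.one,
    Repr.one, HopfAlgebra.antipode_one, hl.one_apply, hl.apply_one, _root_.mul_one, _root_.one_mul,
    mul_smul_comm, TensorProduct.smul_tmul_tmul, Finset.univ_unique, sum_singleton,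
    ← TensorProduct.tmul_sum, sum_counit_smul]

end IsKadisonMul

end Kadison

theorem stmt_5_general (k H A : Type) [Field k] [Ring H] [HopfAlgebra k H]
    [Ring A] [Algebra k A]
    (l : H →ₗ[k] A →ₗ[k] A)
    (hl_one : ∀ a : A, l 1 a = a)
    (hl_mul : ∀ (h h' : H) (a : A), l (h * h') a = l h (l h' a))
    (hl_unit : ∀ h : H, l h (1 : A) = Coalgebra.counit (R := k) h • (1 : A))
    (hl_meas : ∀ (h : H) (a b : A) (s : Finset ℕ) (f g : ℕ → H),
      Coalgebra.comul (R := k) h = ∑ i ∈ s, f i ⊗ₜ[k] g i →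
      l h (a * b) = ∑ i ∈ s, l (f i) a * l (g i) b)
    (mulK : ((A ⊗[k] A) ⊗[k] H) →ₗ[k] ((A ⊗[k] A) ⊗[k] H) →ₗ[k] ((A ⊗[k] A) ⊗[k] H))
    (hK : ∀ (a b a' b' : A) (h h' : H) (s t : Finset ℕ) (f g f' g' : ℕ → H),
      Coalgebra.comul (R := k) h = ∑ i ∈ s, f i ⊗ₜ[k] g i →
      Coalgebra.comul (R := k) h' = ∑ j ∈ t, f' j ⊗ₜ[k] g' j →
      mulK ((a ⊗ₜ[k] b) ⊗ₜ[k] h) ((a' ⊗ₜ[k] b') ⊗ₜ[k] h') =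
        ∑ i ∈ s, ∑ j ∈ t,
          ((a * l (f i) a') ⊗ₜ[k] (b' * l (HopfAlgebra.antipode (R := k) (g' j)) b)) ⊗ₜ[k] (g i * f' j))
    :
    (∀ x y z : (A ⊗[k] A) ⊗[k] H, mulK (mulK x y) z = mulK x (mulK y z)) ∧
    (∀ x : (A ⊗[k] A) ⊗[k] H, mulK (((1 : A) ⊗ₜ[k] (1 : A)) ⊗ₜ[k] (1 : H)) x = x) ∧
    (∀ x : (A ⊗[k] A) ⊗[k] H, mulK x (((1 : A) ⊗ₜ[k] (1 : A)) ⊗ₜ[k] (1 : H)) = x) := by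
  have hl : IsModuleAlgebraAction l := ⟨hl_one, hl_mul, hl_unit, hl_meas⟩
  have hm : IsKadisonMul l mulK := hK
  exact ⟨fun x => (hm.leftNucleus_eq_top hl).ge Submodule.mem_top, hm.one_mul hl, hm.mul_one hl⟩

/-- Kadison's algebra `A^e ◇ H` is an associative unital algebra. -/
theorem stmt_5 (k H A : Type) [Field k] [Ring H] [HopfAlgebra k H]
    [Ring A] [Algebra k A]
    (hbij : Function.Bijective (HopfAlgebra.antipode (R := k) (A := H)))
    (l : H →ₗ[k] A →ₗ[k] A)
    (hl_one : ∀ a : A, l 1 a = a)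
    (hl_mul : ∀ (h h' : H) (a : A), l (h * h') a = l h (l h' a))
    (hl_unit : ∀ h : H, l h (1 : A) = Coalgebra.counit (R := k) h • (1 : A))
    (hl_meas : ∀ (h : H) (a b : A) (s : Finset ℕ) (f g : ℕ → H),
      Coalgebra.comul (R := k) h = ∑ i ∈ s, f i ⊗ₜ[k] g i →
      l h (a * b) = ∑ i ∈ s, l (f i) a * l (g i) b)
    (mulK : ((A ⊗[k] A) ⊗[k] H) →ₗ[k] ((A ⊗[k] A) ⊗[k] H) →ₗ[k] ((A ⊗[k] A) ⊗[k] H))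
    (hK : ∀ (a b a' b' : A) (h h' : H) (s t : Finset ℕ) (f g f' g' : ℕ → H),
      Coalgebra.comul (R := k) h = ∑ i ∈ s, f i ⊗ₜ[k] g i →
      Coalgebra.comul (R := k) h' = ∑ j ∈ t, f' j ⊗ₜ[k] g' j →
      mulK ((a ⊗ₜ[k] b) ⊗ₜ[k] h) ((a' ⊗ₜ[k] b') ⊗ₜ[k] h') =
        ∑ i ∈ s, ∑ j ∈ t,
          ((a * l (f i) a') ⊗ₜ[k] (b' * l (HopfAlgebra.antipode (R := k) (g' j)) b)) ⊗ₜ[k] (g i * f' j))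
    :
    (∀ x y z : (A ⊗[k] A) ⊗[k] H, mulK (mulK x y) z = mulK x (mulK y z)) ∧
    (∀ x : (A ⊗[k] A) ⊗[k] H, mulK (((1 : A) ⊗ₜ[k] (1 : A)) ⊗ₜ[k] (1 : H)) x = x) ∧
    (∀ x : (A ⊗[k] A) ⊗[k] H, mulK x (((1 : A) ⊗ₜ[k] (1 : A)) ⊗ₜ[k] (1 : H)) = x) :=
  stmt_5_general k H A l hl_one hl_mul hl_unit hl_meas mulK hK
end

section
/- The counit ε : A^e ◇ H → A, ε((a⊗b)⊗h) = a(h·b), satisfies ε(1) = 1 and ε(xy) = ε(x s(ε(y))) = ε(x t(ε(y))) for all x, y ∈ A^e ◇ H, where s(a) = (a⊗1)⊗1 and t(a) = (1⊗a)⊗1. -/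
open scoped TensorProduct
open Finset

section Aux

variable {k H A : Type} [Field k] [Ring H] [HopfAlgebra k H] [Ring A] [Algebra k A]

lemma rep_exists (T : H ⊗[k] H) :
    ∃ (s : Finset ℕ) (f g : ℕ → H), T = ∑ i ∈ s, f i ⊗ₜ[k] g i := by
  classical
  have : ∃ (n : ℕ) (f g : ℕ → H), T = ∑ i ∈ range n, f i ⊗ₜ[k] g i := by
    induction T with
    | zero => exact ⟨0, 0, 0, by simp⟩
    | tmul x y => exact ⟨1, fun _ => x, fun _ => y, by simp⟩
    | add x y hx hy =>
      obtain ⟨n, f, g, hx⟩ := hx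
      obtain ⟨m, f', g', hy⟩ := hy
      refine ⟨n + m, fun i => if i < n then f i else f' (i - n),
        fun i => if i < n then g i else g' (i - n), ?_⟩
      rw [Finset.sum_range_add, hx, hy]
      congr 1
      · exact Finset.sum_congr rfl fun i hi => by
          simp [Finset.mem_range.mp hi]
      · exact Finset.sum_congr rfl fun i _ => by simp
  obtain ⟨n, f, g, h⟩ := this
  exact ⟨range n, f, g, h⟩

lemma CL1 (h : H) (s : Finset ℕ) (f g : ℕ → H)
    (hrep : Coalgebra.comul (R := k) h = ∑ i ∈ s, f i ⊗ₜ[k] g i) :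
    ∑ i ∈ s, Coalgebra.counit (R := k) (g i) • f i = h := by
  have h1 : (Coalgebra.counit (R := k) (A := H)).lTensor H (Coalgebra.comul (R := k) h)
      = h ⊗ₜ[k] (1 : k) := Coalgebra.lTensor_counit_comul h
  rw [hrep, map_sum] at h1
  simp only [LinearMap.lTensor_tmul] at h1
  have h2 := congrArg (TensorProduct.rid k H) h1
  simpa [map_sum, TensorProduct.rid_tmul] using h2

lemma CL2 (h : H) (s : Finset ℕ) (f g : ℕ → H)
    (hrep : Coalgebra.comul (R := k) h = ∑ i ∈ s, f i ⊗ₜ[k] g i) :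
    ∑ i ∈ s, Coalgebra.counit (R := k) (f i) • g i = h := by
  have h1 : (Coalgebra.counit (R := k) (A := H)).rTensor H (Coalgebra.comul (R := k) h)
      = (1 : k) ⊗ₜ[k] h := Coalgebra.rTensor_counit_comul h
  rw [hrep, map_sum] at h1
  simp only [LinearMap.rTensor_tmul] at h1
  have h2 := congrArg (TensorProduct.lid k H) h1
  simpa [map_sum, TensorProduct.lid_tmul] using h2

/-- `y ⊗ z ↦ y * S z` -/
noncomputable def psiS (k H : Type) [Field k] [Ring H] [HopfAlgebra k H] :
    H ⊗[k] H →ₗ[k] H :=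
  LinearMap.mul' k H ∘ₗ (HopfAlgebra.antipode (R := k)).lTensor H

lemma psiS_tmul (x y : H) :
    psiS k H (x ⊗ₜ[k] y) = x * HopfAlgebra.antipode (R := k) y := rfl

lemma psiS_comul (x : H) :
    psiS k H (Coalgebra.comul (R := k) x)
      = Coalgebra.counit (R := k) x • (1 : H) := by
  have := HopfAlgebra.mul_antipode_lTensor_comul_apply (R := k) x
  simpa [psiS, Algebra.smul_def] using this

/-- `x ⊗ y ↦ l x a * l y b` -/
noncomputable def Mmap (l : H →ₗ[k] A →ₗ[k] A) (a b : A) : H ⊗[k] H →ₗ[k] A :=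
  TensorProduct.lift ((LinearMap.mul k A).compl₁₂ (l.flip a) (l.flip b))

lemma Mmap_tmul (l : H →ₗ[k] A →ₗ[k] A) (a b : A) (x y : H) :
    Mmap l a b (x ⊗ₜ[k] y) = l x a * l y b := rfl

/-- `x ⊗ (y ⊗ z) ↦ l x b' * l (y * S z) b` -/
noncomputable def Phi (l : H →ₗ[k] A →ₗ[k] A) (b b' : A) :
    H ⊗[k] (H ⊗[k] H) →ₗ[k] A :=
  TensorProduct.lift ((LinearMap.mul k A).compl₁₂ (l.flip b') ((l.flip b) ∘ₗ psiS k H))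

lemma Phi_tmul (l : H →ₗ[k] A →ₗ[k] A) (b b' : A) (x : H) (T : H ⊗[k] H) :
    Phi l b b' (x ⊗ₜ[k] T) = l x b' * l (psiS k H T) b := rfl

/-- `x ⊗ (y ⊗ z) ↦ l x u * (l y v * l z w)` -/
noncomputable def Psi (l : H →ₗ[k] A →ₗ[k] A) (u v w : A) :
    H ⊗[k] (H ⊗[k] H) →ₗ[k] A :=
  TensorProduct.lift ((LinearMap.mul k A).compl₁₂ (l.flip u) (Mmap l v w))

lemma Psi_tmul (l : H →ₗ[k] A →ₗ[k] A) (u v w : A) (x : H) (T : H ⊗[k] H) :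
    Psi l u v w (x ⊗ₜ[k] T) = l x u * Mmap l v w T := rfl

variable (l : H →ₗ[k] A →ₗ[k] A)
    (hl_one : ∀ a : A, l 1 a = a)
    (hl_mul : ∀ (h h' : H) (a : A), l (h * h') a = l h (l h' a))
    (hl_meas : ∀ (h : H) (a b : A) (s : Finset ℕ) (f g : ℕ → H),
      Coalgebra.comul (R := k) h = ∑ i ∈ s, f i ⊗ₜ[k] g i →
      l h (a * b) = ∑ i ∈ s, l (f i) a * l (g i) b)

include hl_one hl_mul hl_meas in
lemma L1 (h : H) (b b' : A) (s : Finset ℕ) (f g : ℕ → H)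
    (hrep : Coalgebra.comul (R := k) h = ∑ i ∈ s, f i ⊗ₜ[k] g i) :
    ∑ i ∈ s, l (f i) (b' * l (HopfAlgebra.antipode (R := k) (g i)) b) = l h b' * b := by
  classical
  have coa := Coalgebra.coassoc_apply (R := k) h
  have hA : ∑ i ∈ s, l (f i) (b' * l (HopfAlgebra.antipode (R := k) (g i)) b)
      = Phi l b b' ((TensorProduct.assoc k H H H)
          ((Coalgebra.comul (R := k)).rTensor H (Coalgebra.comul (R := k) h))) := by
    rw [hrep]
    simp only [map_sum]
    refine Finset.sum_congr rfl fun i _ => ?_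
    rw [LinearMap.rTensor_tmul]
    obtain ⟨s', p, q, hpq⟩ := rep_exists (Coalgebra.comul (R := k) (f i))
    rw [hl_meas (f i) b' (l (HopfAlgebra.antipode (R := k) (g i)) b) s' p q hpq, hpq,
      TensorProduct.sum_tmul]
    simp only [map_sum]
    refine Finset.sum_congr rfl fun m _ => ?_
    rw [TensorProduct.assoc_tmul, Phi_tmul, psiS_tmul, hl_mul]
  rw [hA, coa, hrep]
  simp only [map_sum]
  have hterm : ∀ i ∈ s, Phi l b b'
      ((Coalgebra.comul (R := k)).lTensor H (f i ⊗ₜ[k] g i))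
      = Coalgebra.counit (R := k) (g i) • (l (f i) b' * b) := by
    intro i _
    rw [LinearMap.lTensor_tmul, Phi_tmul, psiS_comul, map_smul]
    simp only [LinearMap.smul_apply, hl_one, mul_smul_comm]
  rw [Finset.sum_congr rfl hterm]
  have hc := CL1 h s f g hrep
  calc ∑ i ∈ s, Coalgebra.counit (R := k) (g i) • (l (f i) b' * b)
      = (∑ i ∈ s, Coalgebra.counit (R := k) (g i) • l (f i) b') * b := by
        rw [Finset.sum_mul]
        exact Finset.sum_congr rfl fun i _ => (smul_mul_assoc _ _ _).symm
    _ = l (∑ i ∈ s, Coalgebra.counit (R := k) (g i) • f i) b' * b := by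
        simp only [map_sum, map_smul, LinearMap.sum_apply, LinearMap.smul_apply]
    _ = l h b' * b := by rw [hc]

include hl_mul hl_meas in
lemma L2 (h : H) (u v w : A) (s : Finset ℕ) (f g : ℕ → H)
    (hrep : Coalgebra.comul (R := k) h = ∑ i ∈ s, f i ⊗ₜ[k] g i) :
    ∑ i ∈ s, l (f i) (u * v) * l (g i) w = ∑ i ∈ s, l (f i) u * l (g i) (v * w) := by
  classical
  have coa := Coalgebra.coassoc_apply (R := k) h
  have hA : ∑ i ∈ s, l (f i) (u * v) * l (g i) w
      = Psi l u v w ((TensorProduct.assoc k H H H)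
          ((Coalgebra.comul (R := k)).rTensor H (Coalgebra.comul (R := k) h))) := by
    rw [hrep]
    simp only [map_sum]
    refine Finset.sum_congr rfl fun i _ => ?_
    rw [LinearMap.rTensor_tmul]
    obtain ⟨s', p, q, hpq⟩ := rep_exists (Coalgebra.comul (R := k) (f i))
    rw [hl_meas (f i) u v s' p q hpq, hpq, TensorProduct.sum_tmul, Finset.sum_mul]
    simp only [map_sum]
    refine Finset.sum_congr rfl fun m _ => ?_
    rw [TensorProduct.assoc_tmul, Psi_tmul, Mmap_tmul, mul_assoc]
  have hB : ∑ i ∈ s, l (f i) u * l (g i) (v * w)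
      = Psi l u v w ((Coalgebra.comul (R := k)).lTensor H (Coalgebra.comul (R := k) h)) := by
    rw [hrep]
    simp only [map_sum]
    refine Finset.sum_congr rfl fun i _ => ?_
    rw [LinearMap.lTensor_tmul, Psi_tmul]
    obtain ⟨s', p, q, hpq⟩ := rep_exists (Coalgebra.comul (R := k) (g i))
    rw [hl_meas (g i) v w s' p q hpq, hpq]
    simp only [map_sum, Mmap_tmul]
  rw [hA, hB, coa]

lemma antipode_one' : HopfAlgebra.antipode (R := k) (1 : H) = 1 := by
  have := HopfAlgebra.mul_antipode_rTensor_comul_apply (R := k) (1 : H)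
  simpa [Bialgebra.comul_one, Algebra.TensorProduct.one_def,
    LinearMap.rTensor_tmul, LinearMap.mul'_apply] using this

lemma comul_one_rep : Coalgebra.comul (R := k) (1 : H)
    = ∑ _i ∈ ({0} : Finset ℕ), (1 : H) ⊗ₜ[k] (1 : H) := by
  simp [Algebra.TensorProduct.one_def]

variable (hl_unit : ∀ h : H, l h (1 : A) = Coalgebra.counit (R := k) h • (1 : A))

variable (mulK : ((A ⊗[k] A) ⊗[k] H) →ₗ[k] ((A ⊗[k] A) ⊗[k] H) →ₗ[k] ((A ⊗[k] A) ⊗[k] H))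
    (hK : ∀ (a b a' b' : A) (h h' : H) (s t : Finset ℕ) (f g f' g' : ℕ → H),
      Coalgebra.comul (R := k) h = ∑ i ∈ s, f i ⊗ₜ[k] g i →
      Coalgebra.comul (R := k) h' = ∑ j ∈ t, f' j ⊗ₜ[k] g' j →
      mulK ((a ⊗ₜ[k] b) ⊗ₜ[k] h) ((a' ⊗ₜ[k] b') ⊗ₜ[k] h') =
        ∑ i ∈ s, ∑ j ∈ t,
          ((a * l (f i) a') ⊗ₜ[k] (b' * l (HopfAlgebra.antipode (R := k) (g' j)) b)) ⊗ₜ[k] (g i * f' j))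
    (ε : ((A ⊗[k] A) ⊗[k] H) →ₗ[k] A)
    (hε : ∀ (a b : A) (h : H), ε ((a ⊗ₜ[k] b) ⊗ₜ[k] h) = a * l h b)

include hl_one hl_mul hl_meas hK hε in
lemma key_eq (a b a' b' : A) (h h' : H) (s : Finset ℕ) (f g : ℕ → H)
    (hrep : Coalgebra.comul (R := k) h = ∑ i ∈ s, f i ⊗ₜ[k] g i) :
    ε (mulK ((a ⊗ₜ[k] b) ⊗ₜ[k] h) ((a' ⊗ₜ[k] b') ⊗ₜ[k] h'))
      = ∑ i ∈ s, (a * l (f i) a') * l (g i) (l h' b' * b) := by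
  obtain ⟨t', f', g', hrep'⟩ := rep_exists (Coalgebra.comul (R := k) h')
  rw [hK a b a' b' h h' s t' f g f' g' hrep hrep']
  simp only [map_sum, hε]
  refine Finset.sum_congr rfl fun i _ => ?_
  simp only [hl_mul]
  rw [← L1 l hl_one hl_mul hl_meas h' b b' t' f' g' hrep', map_sum, Finset.mul_sum]

include hl_one hl_mul hl_meas hK hε in
lemma core_s (a b a' b' : A) (h h' : H) :
    ε (mulK ((a ⊗ₜ[k] b) ⊗ₜ[k] h) (((a' * l h' b') ⊗ₜ[k] (1 : A)) ⊗ₜ[k] (1 : H)))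
      = ε (mulK ((a ⊗ₜ[k] b) ⊗ₜ[k] h) ((a' ⊗ₜ[k] b') ⊗ₜ[k] h')) := by
  obtain ⟨s, f, g, hrep⟩ := rep_exists (Coalgebra.comul (R := k) h)
  rw [key_eq l hl_one hl_mul hl_meas mulK hK ε hε a b a' b' h h' s f g hrep]
  rw [hK a b (a' * l h' b') 1 h 1 s {0} f g (fun _ => 1) (fun _ => 1) hrep
    (comul_one_rep)]
  simp only [Finset.sum_singleton, map_sum, hε, mul_one, antipode_one', hl_one, one_mul]
  have h2 := L2 l hl_mul hl_meas h a' (l h' b') b s f g hrep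
  simp only [mul_assoc, ← Finset.mul_sum]
  rw [h2]

include hl_one hl_mul hl_unit hl_meas hK hε in
lemma core_t (a b a' b' : A) (h h' : H) :
    ε (mulK ((a ⊗ₜ[k] b) ⊗ₜ[k] h) (((1 : A) ⊗ₜ[k] (a' * l h' b')) ⊗ₜ[k] (1 : H)))
      = ε (mulK ((a ⊗ₜ[k] b) ⊗ₜ[k] h) ((a' ⊗ₜ[k] b') ⊗ₜ[k] h')) := by
  obtain ⟨s, f, g, hrep⟩ := rep_exists (Coalgebra.comul (R := k) h)
  rw [key_eq l hl_one hl_mul hl_meas mulK hK ε hε a b a' b' h h' s f g hrep]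
  rw [hK a b 1 (a' * l h' b') h 1 s {0} f g (fun _ => 1) (fun _ => 1) hrep
    (comul_one_rep)]
  simp only [Finset.sum_singleton, map_sum, hε, mul_one, antipode_one', hl_one, one_mul,
    hl_unit]
  -- LHS now: ∑ i, (a * (counit (f i) • 1)) * l (g i) (a' * l h' b' * b)
  have hc2 := CL2 h s f g hrep
  have hm := hl_meas h a' (l h' b' * b) s f g hrep
  calc ∑ i ∈ s, (a * (Coalgebra.counit (R := k) (f i) • (1 : A)))
        * l (g i) (a' * l h' b' * b)
      = a * l h (a' * (l h' b' * b)) := by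
        rw [show a' * (l h' b' * b) = a' * l h' b' * b from (mul_assoc _ _ _).symm]
        rw [← hc2, map_sum, LinearMap.sum_apply, Finset.mul_sum]
        refine Finset.sum_congr rfl fun i _ => ?_
        rw [map_smul, LinearMap.smul_apply]
        rw [mul_assoc, smul_mul_assoc, one_mul]
    _ = ∑ i ∈ s, a * l (f i) a' * l (g i) (l h' b' * b) := by
        rw [hm, Finset.mul_sum]
        exact Finset.sum_congr rfl fun i _ => (mul_assoc _ _ _).symm

lemma ind3 {P : (A ⊗[k] A) ⊗[k] H → Prop} (h0 : P 0)
    (hadd : ∀ u v, P u → P v → P (u + v))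
    (hpure : ∀ (a b : A) (h : H), P ((a ⊗ₜ[k] b) ⊗ₜ[k] h)) : ∀ x, P x := by
  intro x
  induction x with
  | zero => exact h0
  | add u v hu hv => exact hadd u v hu hv
  | tmul t h =>
    induction t with
    | zero => rw [TensorProduct.zero_tmul]; exact h0
    | add t1 t2 h1 h2 => rw [TensorProduct.add_tmul]; exact hadd _ _ h1 h2
    | tmul a b => exact hpure a b h

end Aux

/-- the counit `ε((a⊗b)⊗h) = a(h·b)` of Kadison's bialgebroid satisfies
`ε(1) = 1` and `ε(xy) = ε(x s(ε y)) = ε(x t(ε y))`. -/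
theorem stmt_11 (k H A : Type) [Field k] [Ring H] [HopfAlgebra k H]
    [Ring A] [Algebra k A]
    (hbij : Function.Bijective (HopfAlgebra.antipode (R := k) (A := H)))
    (l : H →ₗ[k] A →ₗ[k] A)
    (hl_one : ∀ a : A, l 1 a = a)
    (hl_mul : ∀ (h h' : H) (a : A), l (h * h') a = l h (l h' a))
    (hl_unit : ∀ h : H, l h (1 : A) = Coalgebra.counit (R := k) h • (1 : A))
    (hl_meas : ∀ (h : H) (a b : A) (s : Finset ℕ) (f g : ℕ → H),
      Coalgebra.comul (R := k) h = ∑ i ∈ s, f i ⊗ₜ[k] g i →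
      l h (a * b) = ∑ i ∈ s, l (f i) a * l (g i) b)
    (mulK : ((A ⊗[k] A) ⊗[k] H) →ₗ[k] ((A ⊗[k] A) ⊗[k] H) →ₗ[k] ((A ⊗[k] A) ⊗[k] H))
    (hK : ∀ (a b a' b' : A) (h h' : H) (s t : Finset ℕ) (f g f' g' : ℕ → H),
      Coalgebra.comul (R := k) h = ∑ i ∈ s, f i ⊗ₜ[k] g i →
      Coalgebra.comul (R := k) h' = ∑ j ∈ t, f' j ⊗ₜ[k] g' j →
      mulK ((a ⊗ₜ[k] b) ⊗ₜ[k] h) ((a' ⊗ₜ[k] b') ⊗ₜ[k] h') =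
        ∑ i ∈ s, ∑ j ∈ t,
          ((a * l (f i) a') ⊗ₜ[k] (b' * l (HopfAlgebra.antipode (R := k) (g' j)) b)) ⊗ₜ[k] (g i * f' j))
    (ε : ((A ⊗[k] A) ⊗[k] H) →ₗ[k] A)
    (hε : ∀ (a b : A) (h : H), ε ((a ⊗ₜ[k] b) ⊗ₜ[k] h) = a * l h b) :
    ε (((1 : A) ⊗ₜ[k] (1 : A)) ⊗ₜ[k] (1 : H)) = 1 ∧
    (∀ x y : (A ⊗[k] A) ⊗[k] H,
      ε (mulK x ((ε y ⊗ₜ[k] (1 : A)) ⊗ₜ[k] (1 : H))) = ε (mulK x y)) ∧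
    (∀ x y : (A ⊗[k] A) ⊗[k] H,
      ε (mulK x (((1 : A) ⊗ₜ[k] ε y) ⊗ₜ[k] (1 : H))) = ε (mulK x y)) := by
  classical
  refine ⟨by rw [hε, hl_one, one_mul], ?_, ?_⟩
  · intro x
    refine ind3 (P := fun z => ∀ y,
      ε (mulK z ((ε y ⊗ₜ[k] (1 : A)) ⊗ₜ[k] (1 : H))) = ε (mulK z y)) ?_ ?_ ?_ x
    · intro y; simp
    · intro u v hu hv y
      simp only [map_add, LinearMap.add_apply]
      rw [hu y, hv y]
    · intro a b h
      refine ind3 (P := fun y =>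
        ε (mulK ((a ⊗ₜ[k] b) ⊗ₜ[k] h) ((ε y ⊗ₜ[k] (1 : A)) ⊗ₜ[k] (1 : H)))
          = ε (mulK ((a ⊗ₜ[k] b) ⊗ₜ[k] h) y)) ?_ ?_ ?_
      · simp
      · intro u v hu hv
        simp only [map_add, TensorProduct.add_tmul]
        rw [hu, hv]
      · intro a' b' h'
        rw [hε a' b' h']
        exact core_s l hl_one hl_mul hl_meas mulK hK ε hε a b a' b' h h'
  · intro x
    refine ind3 (P := fun z => ∀ y,
      ε (mulK z (((1 : A) ⊗ₜ[k] ε y) ⊗ₜ[k] (1 : H))) = ε (mulK z y)) ?_ ?_ ?_ x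
    · intro y; simp
    · intro u v hu hv y
      simp only [map_add, LinearMap.add_apply]
      rw [hu y, hv y]
    · intro a b h
      refine ind3 (P := fun y =>
        ε (mulK ((a ⊗ₜ[k] b) ⊗ₜ[k] h) (((1 : A) ⊗ₜ[k] ε y) ⊗ₜ[k] (1 : H)))
          = ε (mulK ((a ⊗ₜ[k] b) ⊗ₜ[k] h) y)) ?_ ?_ ?_
      · simp
      · intro u v hu hv
        simp only [map_add, TensorProduct.tmul_add, TensorProduct.add_tmul]
        rw [hu, hv]
      · intro a' b' h'
        rw [hε a' b' h']
        exact core_t l hl_one hl_mul hl_meas hl_unit mulK hK ε hε a b a' b' h h'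
end

section
/- The algebra isomorphism Φ : A^e ◇ H → A ⊙ H ⊙ A, Φ(a⊗b⊗h) = a ⊗ h₁ ⊗ (h₂·b), intertwines the source maps, the target maps, and the counits of the two bialgebroid structures over A: Φ(s(a)) = s'(a), Φ(t(a)) = t'(a), and ε'(Φ(x)) = ε(x), where ε((a⊗b)⊗h) = a(h·b) and ε'(a⊗h⊗b) = a ε(h) b. -/
open scoped TensorProduct
open Finset

lemma exists_nat_rep {k H : Type} [Field k] [AddCommGroup H] [Module k H]
    (x : H ⊗[k] H) : ∃ (s : Finset ℕ) (f g : ℕ → H), x = ∑ i ∈ s, f i ⊗ₜ[k] g i := by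
  obtain ⟨S, hS⟩ := TensorProduct.exists_finset x
  classical
  refine ⟨Finset.range S.card,
    fun i => if h : i < S.card then (S.equivFin.symm ⟨i, h⟩).1.1 else 0,
    fun i => if h : i < S.card then (S.equivFin.symm ⟨i, h⟩).1.2 else 0, ?_⟩
  rw [hS, ← Finset.sum_coe_sort S (fun p => p.1 ⊗ₜ[k] p.2),
    ← S.equivFin.symm.sum_comp (fun p : S => (p : H × H).1 ⊗ₜ[k] (p : H × H).2),
    ← Fin.sum_univ_eq_sum_range]
  apply Finset.sum_congr rfl
  intro j _
  simp [j.2]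

/-- the isomorphism `Φ(a⊗b⊗h) = a ⊗ h₁ ⊗ (h₂·b)` intertwines sources,
targets and counits of the two bialgebroid structures over `A`. -/
theorem stmt_12 (k H A : Type) [Field k] [Ring H] [HopfAlgebra k H]
    [Ring A] [Algebra k A]
    (hbij : Function.Bijective (HopfAlgebra.antipode (R := k) (A := H)))
    (l : H →ₗ[k] A →ₗ[k] A)
    (hl_one : ∀ a : A, l 1 a = a)
    (hl_mul : ∀ (h h' : H) (a : A), l (h * h') a = l h (l h' a))
    (hl_unit : ∀ h : H, l h (1 : A) = Coalgebra.counit (R := k) h • (1 : A))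
    (hl_meas : ∀ (h : H) (a b : A) (s : Finset ℕ) (f g : ℕ → H),
      Coalgebra.comul (R := k) h = ∑ i ∈ s, f i ⊗ₜ[k] g i →
      l h (a * b) = ∑ i ∈ s, l (f i) a * l (g i) b)
    (Φ : ((A ⊗[k] A) ⊗[k] H) →ₗ[k] (A ⊗[k] (H ⊗[k] A)))
    (hΦ : ∀ (a b : A) (h : H) (s : Finset ℕ) (f g : ℕ → H),
      Coalgebra.comul (R := k) h = ∑ i ∈ s, f i ⊗ₜ[k] g i →
      Φ ((a ⊗ₜ[k] b) ⊗ₜ[k] h) = ∑ i ∈ s, a ⊗ₜ[k] (f i ⊗ₜ[k] l (g i) b))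
    (ε : ((A ⊗[k] A) ⊗[k] H) →ₗ[k] A)
    (hε : ∀ (a b : A) (h : H), ε ((a ⊗ₜ[k] b) ⊗ₜ[k] h) = a * l h b)
    (ε' : (A ⊗[k] (H ⊗[k] A)) →ₗ[k] A)
    (hε' : ∀ (a b : A) (h : H),
      ε' (a ⊗ₜ[k] (h ⊗ₜ[k] b)) = Coalgebra.counit (R := k) h • (a * b)) :
    (∀ a : A, Φ ((a ⊗ₜ[k] (1 : A)) ⊗ₜ[k] (1 : H)) = a ⊗ₜ[k] ((1 : H) ⊗ₜ[k] (1 : A))) ∧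
    (∀ a : A, Φ (((1 : A) ⊗ₜ[k] a) ⊗ₜ[k] (1 : H)) = (1 : A) ⊗ₜ[k] ((1 : H) ⊗ₜ[k] a)) ∧
    (∀ x : (A ⊗[k] A) ⊗[k] H, ε' (Φ x) = ε x) := by
  have hcomul1 : Coalgebra.comul (R := k) (1 : H)
      = ∑ i ∈ ({0} : Finset ℕ), (fun _ => (1 : H)) i ⊗ₜ[k] (fun _ => (1 : H)) i := by
    simp [Bialgebra.comul_one, Algebra.TensorProduct.one_def]
  -- key: on pure tensors
  have key : ∀ (a b : A) (h : H), ε' (Φ ((a ⊗ₜ[k] b) ⊗ₜ[k] h)) = ε ((a ⊗ₜ[k] b) ⊗ₜ[k] h) := by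
    intro a b h
    obtain ⟨s, f, g, hrep⟩ := exists_nat_rep (Coalgebra.comul (R := k) h)
    have hsum : (∑ i ∈ s, Coalgebra.counit (R := k) (f i) • g i) = h := by
      have := Coalgebra.rTensor_counit_comul (R := k) h
      rw [hrep] at this
      have := congrArg (TensorProduct.lid k H) this
      simpa [map_sum, TensorProduct.smul_tmul'] using this
    rw [hΦ a b h s f g hrep, map_sum, hε]
    have : l h b = ∑ i ∈ s, Coalgebra.counit (R := k) (f i) • l (g i) b := by
      rw [← hsum]
      simp [map_sum]
    rw [this, Finset.mul_sum]
    apply Finset.sum_congr rfl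
    intro i _
    rw [hε']
    rw [mul_smul_comm]
  refine ⟨?_, ?_, ?_⟩
  · intro a
    rw [hΦ a 1 1 _ _ _ hcomul1]
    simp [hl_one]
  · intro a
    rw [hΦ 1 a 1 _ _ _ hcomul1]
    simp [hl_one]
  · intro x
    induction x using TensorProduct.induction_on with
    | zero => simp
    | add x y hx hy => simp [map_add, hx, hy]
    | tmul y h =>
      induction y using TensorProduct.induction_on with
      | zero => simp
      | add y z hy hz =>
        rw [TensorProduct.add_tmul, map_add, map_add, map_add, hy, hz]
      | tmul a b => exact key a b h
end
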